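/- The uniquely closable typable Motzkin trees of size 3n+1 (under the size definition {binary node a = 2, unary node l = 1, leaf v = 0}) are in bijection with binary trees having n binary nodes: the map replacing every terminal subtree l(v) by the leaf v is a bijection from the set of uniquely closable typable skeletons of size 3n+1 onto the set of l-free Motzkin trees with n binary a-nodes. Consequently the number of uniquely closable typable skeletons of size 3n+1 equals the n-th Catalan number, and there are no uniquely closable typable skeletons of size not congruent to 1 modulo 3. -/

import Mathlib

/-- Motzkin trees (binary-unary trees): leaf `v`, unary `l`, binary `a`. -/
inductive Mot : Type
  | v : Mot
  | l : Mot → Mot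
  | a : Mot → Mot → Mot
deriving DecidableEq

/-- Lambda terms in de Bruijn form. -/
inductive Lam : Type
  | v : Nat → Lam
  | l : Lam → Lam
  | a : Lam → Lam → Lam
deriving DecidableEq

/-- `t` is closed at depth `d`. -/
def Lam.closedAt : Lam → Nat → Prop
  | .v i, d => i < d
  | .l t, d => t.closedAt (d + 1)
  | .a s t, d => s.closedAt d ∧ t.closedAt d

/-- The Motzkin-tree skeleton of a de Bruijn term. -/
def Lam.skel : Lam → Mot
  | .v _ => .v
  | .l t => .l t.skel
  | .a s t => .a s.skel t.skel

/-- A Motzkin tree is uniquely closable if exactly one closed term has it as skeleton. -/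
def Mot.UniquelyClosable (X : Mot) : Prop := ∃! t : Lam, t.closedAt 0 ∧ t.skel = X

/-- A Motzkin tree contains no unary node `l`. -/
def Mot.LFree : Mot → Prop
  | .v => True
  | .l _ => False
  | .a s t => s.LFree ∧ t.LFree

/-- Simple types: base type `o` and arrow types. -/
inductive Ty : Type
  | o : Ty
  | arr : Ty → Ty → Ty
deriving DecidableEq

/-- Typing judgment `Γ ⊢ t : A` for de Bruijn terms. -/
inductive HasTy : List Ty → Lam → Ty → Prop
  | var (Γ : List Ty) (i : ℕ) (A : Ty) : Γ[i]? = some A → HasTy Γ (.v i) A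
  | lam (Γ : List Ty) (t : Lam) (A B : Ty) :
      HasTy (A :: Γ) t B → HasTy Γ (.l t) (.arr A B)
  | app (Γ : List Ty) (s t : Lam) (A B : Ty) :
      HasTy Γ s (.arr A B) → HasTy Γ t A → HasTy Γ (.a s t) B

/-- A Motzkin tree is typable if some closed simply-typed term has it as skeleton. -/
def Mot.Typable (X : Mot) : Prop :=
  ∃ (t : Lam) (A : Ty), t.closedAt 0 ∧ HasTy [] t A ∧ t.skel = X

/-- Size with binary node = 2, unary node = 1, leaf = 0. -/
def Mot.size : Mot → ℕ
  | .v => 0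
  | .l t => 1 + t.size
  | .a s t => 2 + s.size + t.size

/-- Number of binary `a` nodes. -/
def Mot.aCount : Mot → ℕ
  | .v => 0
  | .l t => t.aCount
  | .a s t => 1 + s.aCount + t.aCount

/-- Replace every terminal subtree `l(v)` by the leaf `v`. -/
def Mot.collapse : Mot → Mot
  | .v => .v
  | .l .v => .v
  | .l t => .l t.collapse
  | .a s t => .a s.collapse t.collapse

/-!
A leaf at binding depth `k` can be closed in exactly `k` ways, so a skeleton is uniquely closable
iff every leaf lies under exactly one `l`, and its only closed term labels every leaf `0`. Below
the outermost `l` of such a skeleton there is no further `l`, and an application there would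
contain the self-application `0 0`, which has no simple type. Hence every `l` sits directly above
a leaf: the uniquely closable typable skeletons are exactly the binary trees with every leaf
replaced by `l v`, all of which are typable (each subterm `l 0` at type `A → A`). Such a tree
with `n` binary nodes has `n + 1` leaves, hence size `2n + (n + 1) = 3n + 1`, and `collapse`
turns it back into the binary tree with plain leaves.
-/

namespace Mot

/-- `X.LeavesAtDepthOne d`: once `X` is placed under `d` binders, every leaf of `X` is in the
scope of exactly one binder. -/
def LeavesAtDepthOne : Mot → ℕ → Prop
  | .v, d => d = 1
  | .l t, d => t.LeavesAtDepthOne (d + 1)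
  | .a s t, d => s.LeavesAtDepthOne d ∧ t.LeavesAtDepthOne d

def zeroTerm : Mot → Lam
  | .v => .v 0
  | .l t => .l t.zeroTerm
  | .a s t => .a s.zeroTerm t.zeroTerm

theorem LeavesAtDepthOne.le_one {X : Mot} {d : ℕ} (h : X.LeavesAtDepthOne d) : d ≤ 1 := by
  induction X generalizing d with
  | v => exact (h : d = 1).le
  | l t ih => have := ih h; omega
  | a s t ihs _ => exact ihs h.1

theorem LeavesAtDepthOne.lFree {X : Mot} (h : X.LeavesAtDepthOne 1) : X.LFree := by
  induction X with
  | v => trivial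
  | l t _ => exact absurd (LeavesAtDepthOne.le_one (X := t) h) (by decide)
  | a s t ihs iht => exact ⟨ihs h.1, iht h.2⟩

theorem skel_zeroTerm (X : Mot) : X.zeroTerm.skel = X := by
  induction X with
  | v => rfl
  | l t ih => simp only [zeroTerm, Lam.skel, ih]
  | a s t ihs iht => simp only [zeroTerm, Lam.skel, ihs, iht]

theorem closedAt_zeroTerm {X : Mot} {d : ℕ} (h : X.LeavesAtDepthOne d) :
    X.zeroTerm.closedAt d := by
  induction X generalizing d with
  | v => exact (show 0 < d by cases (h : d = 1); decide)
  | l t ih => exact ih h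
  | a s t ihs iht => exact ⟨ihs h.1, iht h.2⟩

end Mot

namespace Lam

theorem eq_zeroTerm_skel {t : Lam} {d : ℕ} (hc : t.closedAt d)
    (h : t.skel.LeavesAtDepthOne d) : t = t.skel.zeroTerm := by
  induction t generalizing d with
  | v i =>
    have hi : i < d := hc
    have hd : d = 1 := h
    simp only [skel, Mot.zeroTerm]
    congr
    omega
  | l s ih => simp only [skel, Mot.zeroTerm, ← ih hc h]
  | a s u ihs ihu => simp only [skel, Mot.zeroTerm, ← ihs hc.1 h.1, ← ihu hc.2 h.2]

/-- A leaf at depth `d ≠ 1` has either no closed label or at least two. -/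
theorem exists_ne_of_not_leavesAtDepthOne {t : Lam} {d : ℕ} (hc : t.closedAt d)
    (h : ¬ t.skel.LeavesAtDepthOne d) :
    ∃ t', t'.closedAt d ∧ t'.skel = t.skel ∧ t' ≠ t := by
  induction t generalizing d with
  | v i =>
    have hi : i < d := hc
    have hd : d ≠ 1 := h
    refine ⟨.v (if i = 0 then 1 else 0), ?_, rfl, ?_⟩
    · change (if i = 0 then 1 else 0) < d
      split <;> omega
    · split <;> simp only [ne_eq, Lam.v.injEq] <;> omega
  | l s ih =>
    obtain ⟨s', hc', hs', hne⟩ := ih hc h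
    exact ⟨.l s', hc', by rw [skel, hs', skel], by simpa using hne⟩
  | a s u ihs ihu =>
    by_cases hs : s.skel.LeavesAtDepthOne d
    · obtain ⟨u', hc', hu', hne⟩ := ihu hc.2 fun hu ↦ h ⟨hs, hu⟩
      exact ⟨.a s u', ⟨hc.1, hc'⟩, by rw [skel, hu', skel], by simpa using hne⟩
    · obtain ⟨s', hc', hs', hne⟩ := ihs hc.1 hs
      exact ⟨.a s' u, ⟨hc', hc.2⟩, by rw [skel, hs', skel], by simpa using hne⟩

end Lam

theorem Mot.uniquelyClosable_iff (X : Mot) : X.UniquelyClosable ↔ X.LeavesAtDepthOne 0 := by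
  constructor
  · rintro ⟨t, ⟨hc, rfl⟩, huniq⟩
    by_contra h
    obtain ⟨t', hc', hs', hne⟩ := Lam.exists_ne_of_not_leavesAtDepthOne hc h
    exact hne (huniq t' ⟨hc', hs'⟩)
  · intro h
    refine ⟨X.zeroTerm, ⟨closedAt_zeroTerm h, skel_zeroTerm X⟩, fun t ⟨hc, hs⟩ ↦ ?_⟩
    subst hs
    exact Lam.eq_zeroTerm_skel hc h

theorem Ty.ne_arr_self_left (A B : Ty) : A ≠ .arr A B := by
  intro h
  have := congrArg sizeOf h
  simp only [Ty.arr.sizeOf_spec] at this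
  omega

theorem HasTy.eq_of_var_singleton {B A : Ty} {i : ℕ} (h : HasTy [B] (.v i) A) : A = B := by
  cases h with
  | var _ _ _ hi =>
    match i, hi with
    | 0, hi => exact (Option.some.inj hi).symm

/-- Both sides of an application would be variables, and the self-application `0 0` has no
simple type. -/
theorem HasTy.skel_eq_v_of_lFree {s : Lam} {B C : Ty} (h : HasTy [B] s C) (hl : s.skel.LFree) :
    s.skel = .v := by
  induction s generalizing C with
  | v i => rfl
  | l t _ => exact hl.elim
  | a s u ihs ihu =>
    cases h with
    | app _ _ _ D _ hs hu =>
      obtain ⟨i, rfl⟩ : ∃ i, s = .v i := by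
        have := ihs hs hl.1
        cases s <;> simp_all [Lam.skel]
      obtain ⟨j, rfl⟩ : ∃ j, u = .v j := by
        have := ihu hu hl.2
        cases u <;> simp_all [Lam.skel]
      have hBD : B = D := hu.eq_of_var_singleton.symm
      subst hBD
      exact absurd hs.eq_of_var_singleton (Ty.ne_arr_self_left B C).symm

namespace BinaryTree

def toMot (leaf : Mot) : BinaryTree Unit → Mot
  | nil => leaf
  | node _ s t => .a (s.toMot leaf) (t.toMot leaf)

variable {leaf : Mot}

theorem toMot_injective (h : ∀ X Y, leaf ≠ .a X Y) : Function.Injective (toMot leaf) := by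
  intro T T' hT
  induction T generalizing T' with
  | nil => cases T' with
    | nil => rfl
    | node _ s t => exact absurd hT (h _ _)
  | node _ s t ihs iht => cases T' with
    | nil => exact absurd hT.symm (h _ _)
    | node _ s' t' =>
      obtain ⟨hs, ht⟩ := Mot.a.inj hT
      rw [ihs hs, iht ht]

theorem aCount_toMot (h : leaf.aCount = 0) (T : BinaryTree Unit) :
    (T.toMot leaf).aCount = T.numNodes := by
  induction T with
  | nil => exact h
  | node _ s t ihs iht => simp only [toMot, Mot.aCount, ihs, iht, numNodes]; ring

theorem size_toMot (T : BinaryTree Unit) :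
    (T.toMot leaf).size = 2 * T.numNodes + T.numLeaves * leaf.size := by
  induction T with
  | nil => simp [toMot]
  | node _ s t ihs iht => simp only [toMot, Mot.size, ihs, iht, numNodes, numLeaves]; ring

theorem size_toMot_lv (T : BinaryTree Unit) : (T.toMot (.l .v)).size = 3 * T.numNodes + 1 := by
  rw [size_toMot, numLeaves_eq_numNodes_succ]
  simp only [Mot.size]
  ring

theorem collapse_toMot_lv (T : BinaryTree Unit) : (T.toMot (.l .v)).collapse = T.toMot .v := by
  induction T with
  | nil => rfl
  | node _ s t ihs iht => simp only [toMot, Mot.collapse, ihs, iht]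

theorem leavesAtDepthOne_toMot_lv (T : BinaryTree Unit) :
    (T.toMot (.l .v)).LeavesAtDepthOne 0 := by
  induction T with
  | nil => rfl
  | node _ s t ihs iht => exact ⟨ihs, iht⟩

theorem hasTy_zeroTerm_toMot_lv (T : BinaryTree Unit) (A : Ty) :
    HasTy [] (T.toMot (.l .v)).zeroTerm (.arr A A) := by
  induction T generalizing A with
  | nil => exact .lam _ _ A A (.var _ 0 A rfl)
  | node _ s t ihs iht => exact .app _ _ _ (.arr A A) (.arr A A) (ihs (.arr A A)) (iht A)

end BinaryTree

open BinaryTree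

theorem Mot.lFree_iff_exists_toMot_v (Y : Mot) :
    Y.LFree ↔ ∃ T : BinaryTree Unit, T.toMot .v = Y := by
  constructor
  · intro h
    induction Y with
    | v => exact ⟨nil, rfl⟩
    | l _ _ => exact h.elim
    | a s t ihs iht =>
      obtain ⟨⟨S, rfl⟩, ⟨T, rfl⟩⟩ := And.intro (ihs h.1) (iht h.2)
      exact ⟨node () S T, rfl⟩
  · rintro ⟨T, rfl⟩
    induction T with
    | nil => trivial
    | node _ s t ihs iht => exact ⟨ihs, iht⟩

theorem Lam.exists_toMot_lv_of_hasTy {t : Lam} {A : Ty} (h : HasTy [] t A)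
    (hd : t.skel.LeavesAtDepthOne 0) : ∃ T : BinaryTree Unit, T.toMot (.l .v) = t.skel := by
  induction t generalizing A with
  | v i => exact absurd hd Nat.zero_ne_one
  | l s _ =>
    cases h with
    | lam _ _ B C hs =>
      have hd' : s.skel.LeavesAtDepthOne 1 := hd
      refine ⟨nil, ?_⟩
      rw [skel, hs.skel_eq_v_of_lFree hd'.lFree]
      rfl
  | a s u ihs ihu =>
    cases h with
    | app _ _ _ _ _ hs hu =>
      obtain ⟨⟨S, hS⟩, ⟨U, hU⟩⟩ := And.intro (ihs hs hd.1) (ihu hu hd.2)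
      exact ⟨node () S U, by rw [skel, ← hS, ← hU]; rfl⟩

theorem Mot.uniquelyClosable_and_typable_iff (X : Mot) :
    X.UniquelyClosable ∧ X.Typable ↔ ∃ T : BinaryTree Unit, T.toMot (.l .v) = X := by
  rw [uniquelyClosable_iff]
  constructor
  · rintro ⟨hd, t, A, -, ht, rfl⟩
    exact Lam.exists_toMot_lv_of_hasTy ht hd
  · rintro ⟨T, rfl⟩
    have hd := leavesAtDepthOne_toMot_lv T
    exact ⟨hd, _, _, closedAt_zeroTerm hd, hasTy_zeroTerm_toMot_lv T .o, skel_zeroTerm _⟩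

theorem setOf_uniquelyClosable_typable_size_eq (n : ℕ) :
    {X : Mot | X.UniquelyClosable ∧ X.Typable ∧ X.size = 3 * n + 1} =
      toMot (.l .v) '' {T | T.numNodes = n} := by
  ext X
  simp only [Set.mem_ofPred_eq, Set.mem_image, ← and_assoc, Mot.uniquelyClosable_and_typable_iff]
  constructor
  · rintro ⟨⟨T, rfl⟩, hsize⟩
    exact ⟨T, by rw [size_toMot_lv] at hsize; omega, rfl⟩
  · rintro ⟨T, rfl, rfl⟩
    exact ⟨⟨T, rfl⟩, size_toMot_lv T⟩

theorem setOf_lFree_aCount_eq (n : ℕ) :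
    {Y : Mot | Y.LFree ∧ Y.aCount = n} = toMot .v '' {T | T.numNodes = n} := by
  ext Y
  simp only [Set.mem_ofPred_eq, Set.mem_image, Mot.lFree_iff_exists_toMot_v]
  constructor
  · rintro ⟨⟨T, rfl⟩, rfl⟩
    exact ⟨T, (aCount_toMot rfl T).symm, rfl⟩
  · rintro ⟨T, rfl, rfl⟩
    exact ⟨⟨T, rfl⟩, aCount_toMot rfl T⟩

theorem stmt18 (n : ℕ) :
    Set.BijOn Mot.collapse
      {X : Mot | X.UniquelyClosable ∧ X.Typable ∧ X.size = 3 * n + 1}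
      {Y : Mot | Y.LFree ∧ Y.aCount = n} ∧
    Nat.card {X : Mot // X.UniquelyClosable ∧ X.Typable ∧ X.size = 3 * n + 1} =
      catalan n ∧
    ∀ k : ℕ, k % 3 ≠ 1 → ¬∃ X : Mot, X.UniquelyClosable ∧ X.Typable ∧ X.size = k := by
  have hcomp : Mot.collapse ∘ toMot (.l .v) = toMot .v := funext collapse_toMot_lv
  have hinj_v : Function.Injective (toMot .v) := toMot_injective fun _ _ ↦ Mot.noConfusion
  have hinj_lv : Function.Injective (toMot (.l .v)) := toMot_injective fun _ _ ↦ Mot.noConfusion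
  refine ⟨?_, ?_, ?_⟩
  · rw [setOf_uniquelyClosable_typable_size_eq, setOf_lFree_aCount_eq, ← hcomp, Set.image_comp]
    exact (hcomp ▸ hinj_v.injOn).image_of_comp.bijOn_image
  · change Nat.card ↥{X : Mot | X.UniquelyClosable ∧ X.Typable ∧ X.size = 3 * n + 1} = _
    rw [setOf_uniquelyClosable_typable_size_eq, Nat.card_image_of_injective hinj_lv,
      ← coe_treesOfNumNodesEq, Finset.coe_sort_coe, Nat.card_eq_finsetCard,
      treesOfNumNodesEq_card_eq_catalan]
  · rintro k hk ⟨X, hUC, hTy, rfl⟩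
    obtain ⟨T, rfl⟩ := (Mot.uniquelyClosable_and_typable_iff X).mp ⟨hUC, hTy⟩
    rw [size_toMot_lv] at hk
    omega
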